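/- If there exists a degree-zero endomorphism φ of M such that the induced k-linear map A on M/𝔪M has two distinct eigenvalues belonging to k, then M is decomposable: M is the internal direct sum of two nonzero graded submodules. -/

import Mathlib

open Polynomial DirectSum
set_option maxHeartbeats 1000000
set_option synthInstance.maxHeartbeats 400000

section aux

variable {k R M : Type*} [Field k] [CommRing R] [Algebra k R]
  [AddCommGroup M] [Module k M] [Module R M] [IsScalarTower k R M]

/-- projection to degree `j` commutes with a degree-preserving `R`-linear map -/
theorem st11.proj_comm (ℳ : ℕ → Submodule k M) [DirectSum.Decomposition ℳ]
    (f : M →ₗ[R] M) (hf : ∀ i, ∀ x ∈ ℳ i, f x ∈ ℳ i) (x : M) (j : ℕ) :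
    (DirectSum.decompose ℳ (f x) j : M) = f (DirectSum.decompose ℳ x j) := by
  induction x using DirectSum.Decomposition.inductionOn ℳ with
  | zero => simp
  | @homogeneous i m =>
      rcases m with ⟨m, hm⟩
      by_cases hij : i = j
      · subst hij
        rw [DirectSum.decompose_of_mem_same ℳ (hf i m hm),
          DirectSum.decompose_of_mem_same ℳ hm]
      · rw [DirectSum.decompose_of_mem_ne ℳ (hf i m hm) hij,
          DirectSum.decompose_of_mem_ne ℳ hm hij, map_zero]
  | add m m' hm hm' =>
      simp only [map_add, DirectSum.decompose_add, DirectSum.add_apply, Submodule.coe_add,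
        hm, hm']

theorem st11.pow_mem (ℳ : ℕ → Submodule k M)
    (φ : Module.End R M) (hφ : ∀ i : ℕ, ∀ x ∈ ℳ i, φ x ∈ ℳ i) (n : ℕ) :
    ∀ i : ℕ, ∀ x ∈ ℳ i, (φ ^ n) x ∈ ℳ i := by
  induction n with
  | zero => intro i x hx; simpa using hx
  | succ n ih =>
      intro i x hx
      rw [pow_succ, Module.End.mul_apply]
      exact ih i _ (hφ i x hx)

theorem st11.aeval_map_mem (ℳ : ℕ → Submodule k M)
    (φ : Module.End R M) (hφ : ∀ i : ℕ, ∀ x ∈ ℳ i, φ x ∈ ℳ i) (p : k[X]) :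
    ∀ i : ℕ, ∀ x ∈ ℳ i, (aeval φ (p.map (algebraMap k R))) x ∈ ℳ i := by
  induction p using Polynomial.induction_on' with
  | add p q hp hq =>
      intro i x hx
      rw [Polynomial.map_add, map_add, LinearMap.add_apply]
      exact add_mem (hp i x hx) (hq i x hx)
  | monomial n a =>
      intro i x hx
      rw [Polynomial.map_monomial, aeval_monomial, Module.End.mul_apply,
        Module.algebraMap_end_apply, algebraMap_smul]
      exact Submodule.smul_mem _ _ (st11.pow_mem ℳ φ hφ n i x hx)

theorem st11.mk_pow (mM : Submodule R M) (φ : Module.End R M)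
    (A : Module.End k (M ⧸ mM))
    (hA : ∀ x : M, A (Submodule.Quotient.mk x) = Submodule.Quotient.mk (φ x)) (n : ℕ) (x : M) :
    (A ^ n) (Submodule.Quotient.mk x) = Submodule.Quotient.mk ((φ ^ n) x) := by
  induction n generalizing x with
  | zero => simp
  | succ n ih =>
      rw [pow_succ, Module.End.mul_apply, pow_succ, Module.End.mul_apply, hA, ih]

theorem st11.mk_aeval (mM : Submodule R M) (φ : Module.End R M)
    (A : Module.End k (M ⧸ mM))
    (hA : ∀ x : M, A (Submodule.Quotient.mk x) = Submodule.Quotient.mk (φ x)) (p : k[X]) (x : M) :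
    (aeval A p) (Submodule.Quotient.mk x)
      = Submodule.Quotient.mk ((aeval φ (p.map (algebraMap k R))) x) := by
  induction p using Polynomial.induction_on' with
  | add p q hp hq => rw [Polynomial.map_add, map_add, map_add, LinearMap.add_apply,
      LinearMap.add_apply, hp, hq, ← Submodule.Quotient.mk_add]
  | monomial n a =>
      rw [Polynomial.map_monomial, aeval_monomial, aeval_monomial, Module.End.mul_apply,
        Module.End.mul_apply, Module.algebraMap_end_apply, Module.algebraMap_end_apply,
        st11.mk_pow mM φ A hA, algebraMap_smul, Submodule.Quotient.mk_smul]

theorem st11.aeval_eigen {V : Type*} [AddCommGroup V] [Module k V]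
    (A : Module.End k V) (lam : k) (v : V) (hv : A v = lam • v) (p : k[X]) :
    (aeval A p) v = p.eval lam • v := by
  have hpow : ∀ n : ℕ, (A ^ n) v = lam ^ n • v := by
    intro n
    induction n with
    | zero => simp
    | succ n ih => rw [pow_succ, Module.End.mul_apply, hv, map_smul, ih, smul_smul, ← pow_succ']
  induction p using Polynomial.induction_on' with
  | add p q hp hq => rw [map_add, LinearMap.add_apply, hp, hq, eval_add, add_smul]
  | monomial n a =>
      rw [aeval_monomial, Module.End.mul_apply, Module.algebraMap_end_apply, hpow,
        eval_monomial, smul_smul]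

/-- coe of degree-`d` component of a finite sum -/
theorem st11.decompose_coe_sum {ι : Type*} (ℳ : ℕ → Submodule k M) [DirectSum.Decomposition ℳ]
    (s : Finset ι) (g : ι → M) (d : ℕ) :
    (DirectSum.decompose ℳ (∑ i ∈ s, g i) d : M)
      = ∑ i ∈ s, (DirectSum.decompose ℳ (g i) d : M) := by
  classical
  induction s using Finset.cons_induction with
  | empty => simp
  | cons a s ha ih =>
      rw [Finset.sum_cons, Finset.sum_cons, DirectSum.decompose_add, DirectSum.add_apply,
        Submodule.coe_add, ih]

end aux
/-- Let `k` be a field, `R` a commutative ℕ-graded ring with `R₀ = k`,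
finitely generated as a `k`-algebra, `𝔪` its irrelevant maximal ideal, and `M` a nonzero
finitely generated graded `R`-module. If there is a degree-zero endomorphism `φ` of `M` whose
induced `k`-linear map `A` on `M/𝔪M` has two distinct eigenvalues in `k`, then `M` is
decomposable: `M` is the internal direct sum of two nonzero graded submodules. -/
theorem statement_11 {k R M : Type*} [Field k] [CommRing R] [Algebra k R]
    (𝒜 : ℕ → Submodule k R) [GradedAlgebra 𝒜]
    (h0 : ∀ x ∈ 𝒜 0, ∃ c : k, algebraMap k R c = x)
    (hFT : Algebra.FiniteType k R)
    [AddCommGroup M] [Module k M] [Module R M] [IsScalarTower k R M]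
    [Module.Finite R M] [Nontrivial M]
    (ℳ : ℕ → Submodule k M) [SetLike.GradedSMul 𝒜 ℳ] [DirectSum.Decomposition ℳ]
    (mM : Submodule R M) (hmM : mM = (HomogeneousIdeal.irrelevant 𝒜).toIdeal • ⊤)
    (φ : Module.End R M) (hφ : ∀ i : ℕ, ∀ x ∈ ℳ i, φ x ∈ ℳ i)
    (A : Module.End k (M ⧸ mM))
    (hA : ∀ x : M, A (Submodule.Quotient.mk x) = Submodule.Quotient.mk (φ x))
    (lam₁ lam₂ : k) (hne : lam₁ ≠ lam₂)
    (h1 : Module.End.HasEigenvalue A lam₁) (h2 : Module.End.HasEigenvalue A lam₂) :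
    ∃ N₁ N₂ : Submodule R M, N₁ ≠ ⊥ ∧ N₂ ≠ ⊥ ∧ IsCompl N₁ N₂ ∧
      (∀ x ∈ N₁, ∀ i : ℕ, (DirectSum.decompose ℳ x i : M) ∈ N₁) ∧
      (∀ x ∈ N₂, ∀ i : ℕ, (DirectSum.decompose ℳ x i : M) ∈ N₂) := by
  classical
  -- the ring hom `k[X] → End R M` sending `p` to `p(φ)`
  set Φ : k[X] →+* Module.End R M :=
    ((Polynomial.aeval φ : R[X] →ₐ[R] Module.End R M) :
      R[X] →+* Module.End R M).comp (Polynomial.mapRingHom (algebraMap k R)) with hΦdef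
  have hΦ : ∀ p : k[X], Φ p = aeval φ (p.map (algebraMap k R)) := fun p => rfl
  have hΦmem : ∀ (p : k[X]) (i : ℕ), ∀ x ∈ ℳ i, Φ p x ∈ ℳ i := by
    intro p
    rw [hΦ]
    exact st11.aeval_map_mem ℳ φ hφ p
  have hΦmk : ∀ (p : k[X]) (x : M),
      (aeval A p) (Submodule.Quotient.mk x) = Submodule.Quotient.mk (Φ p x) := by
    intro p x
    rw [hΦ]
    exact st11.mk_aeval mM φ A hA p x
  -- the union-of-kernels submodule
  set N : k[X] → Submodule R M := fun h => ⨆ n : ℕ, LinearMap.ker (Φ (h ^ n)) with hNdef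
  have hker_mono : ∀ h : k[X], Monotone fun n => LinearMap.ker (Φ (h ^ n)) := by
    intro h n m hnm x hx
    simp only [LinearMap.mem_ker] at hx ⊢
    rw [← pow_sub_mul_pow h hnm, map_mul, Module.End.mul_apply, hx, map_zero]
  have hNmem : ∀ (h : k[X]) (x : M), x ∈ N h ↔ ∃ n, Φ (h ^ n) x = 0 := by
    intro h x
    rw [hNdef]
    rw [Submodule.mem_iSup_of_directed _ ((hker_mono h).directed_le)]
    simp [LinearMap.mem_ker]
  have hNgr : ∀ (h : k[X]), ∀ x ∈ N h, ∀ i : ℕ, (DirectSum.decompose ℳ x i : M) ∈ N h := by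
    intro h x hx i
    obtain ⟨n, hn⟩ := (hNmem h x).1 hx
    refine (hNmem h _).2 ⟨n, ?_⟩
    rw [← st11.proj_comm ℳ (Φ (h ^ n)) (hΦmem (h ^ n)) x i, hn, DirectSum.decompose_zero]
    simp
  -- every element of `R` is a `k`-scalar plus an element of the irrelevant ideal
  have hrdec : ∀ r : R, ∃ cc : k,
      r - algebraMap k R cc ∈ (HomogeneousIdeal.irrelevant 𝒜).toIdeal := by
    intro r
    obtain ⟨cc, hcc⟩ := h0 (DirectSum.decompose 𝒜 r 0 : R) (DirectSum.decompose 𝒜 r 0).2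
    refine ⟨cc, HomogeneousIdeal.mem_iff.2 ((HomogeneousIdeal.mem_irrelevant_iff 𝒜 _).2 ?_)⟩
    have hmem0 : algebraMap k R cc ∈ 𝒜 0 := by
      rw [hcc]; exact (DirectSum.decompose 𝒜 r 0).2
    rw [map_sub, GradedRing.proj_apply, GradedRing.proj_apply,
      DirectSum.decompose_of_mem_same 𝒜 hmem0, hcc, sub_self]
  -- the quotient is finite dimensional over `k`
  haveI hfin : Module.Finite k (M ⧸ mM) := by
    obtain ⟨s, hs⟩ := Module.Finite.fg_top (R := R) (M := M)
    refine ⟨⟨s.image (Submodule.Quotient.mk (p := mM)), eq_top_iff.2 ?_⟩⟩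
    rintro v -
    obtain ⟨x, rfl⟩ := Submodule.Quotient.mk_surjective mM v
    have hxtop : x ∈ Submodule.span R (s : Set M) := by rw [hs]; trivial
    refine Submodule.span_induction ?_ ?_ ?_ ?_ hxtop
    · intro y hy
      exact Submodule.subset_span (by
        simp only [Finset.coe_image]
        exact Set.mem_image_of_mem _ hy)
    · simp
    · intro y z _ _ hy hz
      rw [Submodule.Quotient.mk_add]
      exact Submodule.add_mem _ hy hz
    · intro r y _ hy
      obtain ⟨cc, hcc⟩ := hrdec r
      have hzero : (Submodule.Quotient.mk ((r - algebraMap k R cc) • y) : M ⧸ mM) = 0 :=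
        (Submodule.Quotient.mk_eq_zero mM).2 (hmM ▸ Submodule.smul_mem_smul hcc Submodule.mem_top)
      have : (Submodule.Quotient.mk (r • y) : M ⧸ mM) = cc • Submodule.Quotient.mk y := by
        have hsplit : r • y = (r - algebraMap k R cc) • y + cc • y := by
          rw [sub_smul, algebraMap_smul, sub_add_cancel]
        rw [hsplit, Submodule.Quotient.mk_add, hzero, zero_add, Submodule.Quotient.mk_smul]
      rw [this]
      exact Submodule.smul_mem _ cc hy
  haveI : FiniteDimensional k (M ⧸ mM) := hfin
  have hAint : IsIntegral k A := Algebra.IsIntegral.isIntegral A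
  set c : k[X] := minpoly k A with hcdef
  have hc0 : c ≠ 0 := minpoly.ne_zero hAint
  set a : ℕ := c.rootMultiplicity lam₁ with hadef
  set h₁ : k[X] := (X - C lam₁) ^ a with hh₁
  set h₂ : k[X] := c /ₘ (X - C lam₁) ^ a with hh₂
  have hfac : h₁ * h₂ = c := pow_mul_divByMonic_rootMultiplicity_eq c lam₁
  have heval2 : h₂.eval lam₁ ≠ 0 := eval_divByMonic_pow_rootMultiplicity_ne_zero lam₁ hc0
  have heval1 : h₁.eval lam₂ ≠ 0 := by
    rw [hh₁]
    simp only [eval_pow, eval_sub, eval_X, eval_C]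
    exact pow_ne_zero _ (sub_ne_zero_of_ne hne.symm)
  have hcop : IsCoprime h₁ h₂ :=
    ((Polynomial.irreducible_X_sub_C lam₁).coprime_iff_not_dvd.mpr
      (fun hdvd => heval2 (dvd_iff_isRoot.1 hdvd))).pow_left
  -- `c(φ)` maps into `mM`
  have hcmem : ∀ x : M, Φ c x ∈ mM := by
    intro x
    have h := hΦmk c x
    rw [hcdef, minpoly.aeval] at h
    exact (Submodule.Quotient.mk_eq_zero mM).1 (by rw [← h]; simp)
  -- local nilpotence of `c(φ)`
  have hkey : ∀ d : ℕ, ∀ x ∈ ℳ d, x ∈ N c := by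
    intro d
    induction d using Nat.strong_induction_on with
    | _ d ih =>
      intro x hx
      have h1' : Φ c x ∈ mM := hcmem x
      have h2' : Φ c x ∈ ℳ d := hΦmem c d x hx
      set L : Submodule R M :=
        Submodule.span R (⋃ (e : ℕ) (_ : e < d), (ℳ e : Set M)) with hL
      have hLN : L ≤ N c := by
        rw [hL, Submodule.span_le]
        intro y hy
        simp only [Set.mem_iUnion] at hy
        obtain ⟨e, he, hye⟩ := hy
        exact ih e he y hye
      have hproj : ∀ z ∈ mM, (DirectSum.decompose ℳ z d : M) ∈ L := by
        intro z hz
        rw [hmM] at hz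
        refine Submodule.smul_induction_on hz ?_ ?_
        · intro r hr m _
          have hr0 : (DirectSum.decompose 𝒜 r 0 : R) = 0 := by
            have := (HomogeneousIdeal.mem_irrelevant_iff 𝒜 r).1 (HomogeneousIdeal.mem_iff.1 hr)
            rwa [GradedRing.proj_apply] at this
          have hrsum := DirectSum.sum_support_decompose 𝒜 r
          have hmsum := DirectSum.sum_support_decompose ℳ m
          rw [← hrsum, ← hmsum, Finset.sum_smul, st11.decompose_coe_sum]
          refine Submodule.sum_mem _ fun i _ => ?_
          rw [Finset.smul_sum, st11.decompose_coe_sum]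
          refine Submodule.sum_mem _ fun j _ => ?_
          have hmem : (DirectSum.decompose 𝒜 r i : R) • (DirectSum.decompose ℳ m j : M)
              ∈ ℳ (i + j) :=
            SetLike.GradedSMul.smul_mem (DirectSum.decompose 𝒜 r i).2
              (DirectSum.decompose ℳ m j).2
          by_cases hd : i + j = d
          · rw [hd] at hmem
            rw [DirectSum.decompose_of_mem_same ℳ hmem]
            rcases Nat.eq_zero_or_pos i with hi0 | hipos
            · rw [hi0, hr0, zero_smul]
              exact Submodule.zero_mem L
            · have hj : j < d := by omega
              exact Submodule.smul_mem L _ (Submodule.subset_span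
                (Set.mem_iUnion.2 ⟨j, Set.mem_iUnion.2 ⟨hj, (DirectSum.decompose ℳ m j).2⟩⟩))
          · rw [DirectSum.decompose_of_mem_ne ℳ hmem hd]
            exact Submodule.zero_mem L
        · intro y z hy hz
          rw [DirectSum.decompose_add, DirectSum.add_apply, Submodule.coe_add]
          exact Submodule.add_mem L hy hz
      have hΦcx : Φ c x ∈ N c := hLN (by
        have := hproj _ h1'
        rwa [DirectSum.decompose_of_mem_same ℳ h2'] at this)
      obtain ⟨n, hn⟩ := (hNmem c _).1 hΦcx
      refine (hNmem c x).2 ⟨n + 1, ?_⟩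
      rw [pow_succ, map_mul, Module.End.mul_apply, hn]
  have hnil : ∀ x : M, ∃ n, Φ (c ^ n) x = 0 := by
    intro x
    refine (hNmem c x).1 ?_
    rw [← DirectSum.sum_support_decompose ℳ x]
    exact Submodule.sum_mem _ fun i _ => hkey i _ (DirectSum.decompose ℳ x i).2
  -- sup and inf
  have hsup : N h₁ ⊔ N h₂ = ⊤ := by
    rw [eq_top_iff]
    rintro x -
    obtain ⟨n, hn⟩ := hnil x
    obtain ⟨u, v, huv⟩ := (hcop.pow (m := n) (n := n))
    have hx : x = Φ (u * h₁ ^ n) x + Φ (v * h₂ ^ n) x := by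
      have h := congrArg (fun p => Φ p x) huv
      simpa [map_add, map_one] using h.symm
    rw [hx]
    refine Submodule.add_mem _ (Submodule.mem_sup_right ?_) (Submodule.mem_sup_left ?_)
    · refine (hNmem h₂ _).2 ⟨n, ?_⟩
      have heq : h₂ ^ n * (u * h₁ ^ n) = u * c ^ n := by rw [← hfac]; ring
      rw [← Module.End.mul_apply, ← map_mul, heq, map_mul, Module.End.mul_apply, hn, map_zero]
    · refine (hNmem h₁ _).2 ⟨n, ?_⟩
      have heq : h₁ ^ n * (v * h₂ ^ n) = v * c ^ n := by rw [← hfac]; ring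
      rw [← Module.End.mul_apply, ← map_mul, heq, map_mul, Module.End.mul_apply, hn, map_zero]
  have hinf : N h₁ ⊓ N h₂ = ⊥ := by
    rw [eq_bot_iff]
    rintro x hx
    obtain ⟨hx1, hx2⟩ := Submodule.mem_inf.1 hx
    obtain ⟨n, hn1⟩ := (hNmem h₁ x).1 hx1
    obtain ⟨m, hn2⟩ := (hNmem h₂ x).1 hx2
    obtain ⟨u, v, huv⟩ := (hcop.pow (m := n) (n := m))
    have hx0 : x = Φ u (Φ (h₁ ^ n) x) + Φ v (Φ (h₂ ^ m) x) := by
      have h := congrArg (fun p => Φ p x) huv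
      simpa [map_add, map_mul, map_one, Module.End.mul_apply] using h.symm
    rw [Submodule.mem_bot, hx0, hn1, hn2, map_zero, map_zero, add_zero]
  -- nontriviality
  have hne₁ : N h₁ ≠ ⊥ := by
    intro hbot
    have htop : N h₂ = ⊤ := by rw [← hsup, hbot, bot_sup_eq]
    obtain ⟨w, hw⟩ := h1.exists_hasEigenvector
    obtain ⟨x, rfl⟩ := Submodule.Quotient.mk_surjective mM w
    obtain ⟨n, hnx⟩ := (hNmem h₂ x).1 (htop ▸ Submodule.mem_top)
    have hz : (aeval A (h₂ ^ n)) (Submodule.Quotient.mk x) = 0 := by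
      rw [hΦmk, hnx, Submodule.Quotient.mk_zero]
    rw [st11.aeval_eigen A lam₁ _ hw.apply_eq_smul (h₂ ^ n), eval_pow] at hz
    rcases smul_eq_zero.1 hz with h | h
    · exact pow_ne_zero n heval2 h
    · exact hw.right h
  have hne₂ : N h₂ ≠ ⊥ := by
    intro hbot
    have htop : N h₁ = ⊤ := by rw [← hsup, hbot, sup_bot_eq]
    obtain ⟨w, hw⟩ := h2.exists_hasEigenvector
    obtain ⟨x, rfl⟩ := Submodule.Quotient.mk_surjective mM w
    obtain ⟨n, hnx⟩ := (hNmem h₁ x).1 (htop ▸ Submodule.mem_top)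
    have hz : (aeval A (h₁ ^ n)) (Submodule.Quotient.mk x) = 0 := by
      rw [hΦmk, hnx, Submodule.Quotient.mk_zero]
    rw [st11.aeval_eigen A lam₂ _ hw.apply_eq_smul (h₁ ^ n), eval_pow] at hz
    rcases smul_eq_zero.1 hz with h | h
    · exact pow_ne_zero n heval1 h
    · exact hw.right h
  exact ⟨N h₁, N h₂, hne₁, hne₂,
    isCompl_iff.2 ⟨disjoint_iff.2 hinf, codisjoint_iff.2 hsup⟩,
    hNgr h₁, hNgr h₂⟩
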